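/- Let A = (a_{st}) ∈ M(n,ℍ) and fix j ∈ {1,…,n}. Then cdet_j A = Σ_{i=1}^n L_{ij} · a_{ij}, where the left ij-th cofactor is L_{ij} = −cdet_i (A^{jj}_{i.}(a_{j.})) for i ≠ j and L_{jj} = cdet_k (A^{jj}) with k = min({1,…,n} \ {j}); here A^{jj} denotes the matrix obtained from A by deleting its j-th row and j-th column, a_{j.} denotes the j-th row of A, and A^{jj}_{i.}(a_{j.}) is obtained from A by replacing the i-th row with the j-th row and then deleting both the j-th row and the j-th column. -/

import Mathlib

open scoped Quaternion
open Matrix Filter Topology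

noncomputable section

/-- The product of entries along the cycle of `σ` containing `c`, written in left-ordered
cycle notation starting at `c`: `a_{c, σc} a_{σc, σ²c} ⋯ a_{σ^{l}c, c}`. -/
def cycProdL {n : ℕ} (A : Matrix (Fin n) (Fin n) ℍ[ℝ]) (σ : Equiv.Perm (Fin n))
    (c : Fin n) : ℍ[ℝ] :=
  ((List.range (Function.minimalPeriod (⇑σ) c)).map
    fun t => A ((σ ^ t) c) ((σ ^ (t + 1)) c)).prod

/-- The product of entries along the cycle of `σ` containing `c`, written in right-ordered
cycle notation ending at `c`: `a_{c, σ^{l}c} a_{σ^{l}c, σ^{l-1}c} ⋯ a_{σc, c}`. -/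
def cycProdR {n : ℕ} (A : Matrix (Fin n) (Fin n) ℍ[ℝ]) (σ : Equiv.Perm (Fin n))
    (c : Fin n) : ℍ[ℝ] :=
  (((List.range (Function.minimalPeriod (⇑σ) c)).map
    fun t => A ((σ ^ (t + 1)) c) ((σ ^ t) c)).reverse).prod

/-- The number `r` of disjoint cycles (fixed points included) of a permutation:
the number of points that are minimal in their own cycle. -/
def cycCount {n : ℕ} (σ : Equiv.Perm (Fin n)) : ℕ :=
  (Finset.univ.filter fun c : Fin n => ∀ d, σ.SameCycle c d → c ≤ d).card

/-- The `i`-th row determinant of a square quaternion matrix: the cycle containing `i`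
is written first, starting with `i`; all other cycles start with their smallest elements
and are ordered from left to right by increasing first elements. -/
def rdet {n : ℕ} (A : Matrix (Fin n) (Fin n) ℍ[ℝ]) (i : Fin n) : ℍ[ℝ] :=
  ∑ σ : Equiv.Perm (Fin n),
    (-1 : ℍ[ℝ]) ^ (n - cycCount σ) *
      (cycProdL A σ i *
        (((List.finRange n).filter fun c =>
            decide (¬σ.SameCycle i c ∧ ∀ d, σ.SameCycle c d → c ≤ d)).map
          (cycProdL A σ)).prod)

/-- The `j`-th column determinant of a square quaternion matrix: the cycle containing `j`
is written last, ending with `j`; all other cycles end with their smallest elements,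
the last elements increasing from right to left. -/
def cdet {n : ℕ} (A : Matrix (Fin n) (Fin n) ℍ[ℝ]) (j : Fin n) : ℍ[ℝ] :=
  ∑ σ : Equiv.Perm (Fin n),
    (-1 : ℍ[ℝ]) ^ (n - cycCount σ) *
      ((((((List.finRange n).filter fun c =>
            decide (¬σ.SameCycle j c ∧ ∀ d, σ.SameCycle c d → c ≤ d)).map
          (cycProdR A σ)).reverse).prod) * cycProdR A σ j)

/-- The determinant of a Hermitian quaternion matrix (the common value of all row and
column determinants): every cycle is written starting with its smallest element and the
cycles are ordered from left to right by increasing first elements. -/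
def hdet {n : ℕ} (A : Matrix (Fin n) (Fin n) ℍ[ℝ]) : ℍ[ℝ] :=
  ∑ σ : Equiv.Perm (Fin n),
    (-1 : ℍ[ℝ]) ^ (n - cycCount σ) *
      (((List.finRange n).filter fun c =>
          decide (∀ d, σ.SameCycle c d → c ≤ d)).map
        (cycProdL A σ)).prod

/-- The double determinant of a square quaternion matrix. -/
def ddet {n : ℕ} (A : Matrix (Fin n) (Fin n) ℍ[ℝ]) : ℍ[ℝ] := hdet (Aᴴ * A)

/-- The rank of a quaternion matrix: the maximal number of right linearly independent
columns, i.e. the dimension of the right ℍ-span of the columns. -/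
def qrank {m n : ℕ} (A : Matrix (Fin m) (Fin n) ℍ[ℝ]) : ℕ :=
  Module.finrank ℍ[ℝ]ᵐᵒᵖ
    (Submodule.span ℍ[ℝ]ᵐᵒᵖ (Set.range fun j : Fin n => fun i => A i j))

/-- The Frobenius norm of a quaternion matrix. -/
def fnorm {m n : ℕ} (A : Matrix (Fin m) (Fin n) ℍ[ℝ]) : ℝ :=
  Real.sqrt (∑ i, ∑ j, ‖A i j‖ ^ 2)

/-- `X` is the Moore–Penrose inverse of `A`: the four Penrose equations. -/
def IsMP {m n : ℕ} (A : Matrix (Fin m) (Fin n) ℍ[ℝ])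
    (X : Matrix (Fin n) (Fin m) ℍ[ℝ]) : Prop :=
  A * X * A = A ∧ X * A * X = X ∧ (A * X)ᴴ = A * X ∧ (X * A)ᴴ = X * A

/-- The left `ij`-th cofactor of `A`: for `i ≠ j` it is `−cdet_i` of the matrix obtained
from `A` by replacing the `i`-th row with the `j`-th row and deleting the `j`-th row and
column (the index of that row in the submatrix being the unique `t` with
`j.succAbove t = i`); for `i = j` it is `cdet_k` of `A` with the `j`-th row and column
deleted, where `k = min({1,…,n} \ {j})` corresponds to the index `0` of the submatrix. -/
def Lcof {n : ℕ} (A : Matrix (Fin (n + 2)) (Fin (n + 2)) ℍ[ℝ]) (i j : Fin (n + 2)) :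
    ℍ[ℝ] :=
  if i = j then cdet (A.submatrix j.succAbove j.succAbove) 0
  else
    -∑ t ∈ Finset.univ.filter fun t : Fin (n + 1) => j.succAbove t = i,
      cdet ((A.updateRow i fun s => A j s).submatrix j.succAbove j.succAbove) t

/-!
Split a permutation `σ` of `Fin (n + 2)` according to `σ j`, and cut `j` out of its cycle; this
leaves a permutation `τ` of the other `n + 1` indices, and `(σ j, τ)` determines `σ`.

If `σ j = j`, the cycle `(j)` is written last and contributes the factor `a_jj`; the remaining
cycles, ordered by their least elements, are exactly the term of `τ` in `cdet_k A^{jj}`, since the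
cycle of `k` is the rightmost one among them.

If `σ j = i ≠ j`, the cycle `(c_l … c_1 i j)` contributes `a_{j c_l} a_{c_l c_{l-1}} ⋯ a_{c_1 i}`
followed by `a_ij`; the first product is the contribution of the cycle `(c_l … c_1 i)` of `τ`,
written last, to `cdet_i` of the matrix whose `i`-th row has been replaced by the `j`-th. The
other cycles are untouched, so `σ` and `τ` have the same number of cycles on `n + 2` and `n + 1`
points, and this parity shift is the sign of the off-diagonal cofactors.
-/

open Equiv Function

namespace Equiv.Perm

variable {α β : Type*}

theorem pow_minimalPeriod_apply [Finite α] (σ : Perm α) (x : α) :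
    (σ ^ minimalPeriod σ x) x = x := by
  rw [← iterate_eq_pow]
  exact iterate_minimalPeriod

theorem minimalPeriod_pos [Finite α] (σ : Perm α) (x : α) : 0 < minimalPeriod σ x :=
  minimalPeriod_pos_of_mem_periodicPts (σ.injective.mem_periodicPts x)

def SemiconjOnCycle (f : α → β) (σ : Perm β) (τ : Perm α) (s : α) : Prop :=
  ∀ x, τ.SameCycle s x → σ (f x) = f (τ x)

namespace SemiconjOnCycle

variable {f : α → β} {σ : Perm β} {τ : Perm α} {s : α}

theorem pow_apply (h : SemiconjOnCycle f σ τ s) (k : ℕ) : (σ ^ k) (f s) = f ((τ ^ k) s) := by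
  induction k with
  | zero => rfl
  | succ k ih =>
    rw [pow_succ', mul_apply, ih, h _ (sameCycle_pow_right.mpr .rfl), ← mul_apply, ← pow_succ']

theorem minimalPeriod_eq (h : SemiconjOnCycle f σ τ s) (hf : Injective f) :
    minimalPeriod σ (f s) = minimalPeriod τ s :=
  minimalPeriod_eq_minimalPeriod_iff.mpr fun k => by
    simp only [IsPeriodicPt, IsFixedPt, iterate_eq_pow, h.pow_apply, hf.eq_iff]

theorem sameCycle_iff [Finite α] [Finite β] (h : SemiconjOnCycle f σ τ s) {d : β} :
    σ.SameCycle (f s) d ↔ ∃ x, τ.SameCycle s x ∧ f x = d := by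
  constructor
  · intro hd
    obtain ⟨k, rfl⟩ := hd.exists_nat_pow_eq
    exact ⟨(τ ^ k) s, sameCycle_pow_right.mpr .rfl, (h.pow_apply k).symm⟩
  · rintro ⟨x, hx, rfl⟩
    obtain ⟨k, rfl⟩ := hx.exists_nat_pow_eq
    rw [← h.pow_apply]
    exact sameCycle_pow_right.mpr .rfl

theorem isCycleMin_iff [Finite α] [Finite β] [LinearOrder α] [LinearOrder β]
    (h : SemiconjOnCycle f σ τ s) (hf : StrictMono f) :
    (∀ d, σ.SameCycle (f s) d → f s ≤ d) ↔ ∀ x, τ.SameCycle s x → s ≤ x := by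
  simp only [h.sameCycle_iff, forall_exists_index, and_imp]
  exact ⟨fun hm x hx => hf.le_iff_le.mp (hm _ x hx rfl),
    fun hm _ x hx hd => hd ▸ hf.le_iff_le.mpr (hm x hx)⟩

end SemiconjOnCycle

end Equiv.Perm

open Finset

theorem Equiv.Perm.SemiconjOnCycle.cycProdR_eq {m m' : ℕ} {f : Fin m → Fin m'}
    {σ : Perm (Fin m')} {τ : Perm (Fin m)} {s : Fin m} (h : σ.SemiconjOnCycle f τ s)
    (hf : Injective f) {A : Matrix (Fin m') (Fin m') ℍ[ℝ]} {B : Matrix (Fin m) (Fin m) ℍ[ℝ]}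
    (hAB : ∀ x y, τ.SameCycle s x → A (f x) (f y) = B x y) :
    cycProdR A σ (f s) = cycProdR B τ s := by
  unfold cycProdR
  rw [h.minimalPeriod_eq hf]
  congr 2
  refine List.map_congr_left fun k _ => ?_
  rw [h.pow_apply, h.pow_apply]
  exact hAB _ _ (Perm.sameCycle_pow_right.mpr .rfl)

section SameCycleFinset

variable {α β : Type*} [Fintype α] [DecidableEq α] [Fintype β] [DecidableEq β]

def sameCycleFinset (σ : Perm α) (c : α) : Finset α :=
  univ.filter (σ.SameCycle c)

theorem mem_sameCycleFinset {σ : Perm α} {c d : α} :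
    d ∈ sameCycleFinset σ c ↔ σ.SameCycle c d := by
  simp [sameCycleFinset]

theorem sameCycleFinset_eq_iff {σ : Perm α} {c d : α} :
    sameCycleFinset σ c = sameCycleFinset σ d ↔ σ.SameCycle c d := by
  refine ⟨fun h => mem_sameCycleFinset.mp (h ▸ mem_sameCycleFinset.mpr .rfl), fun h => ?_⟩
  ext x
  simp only [mem_sameCycleFinset]
  exact ⟨h.symm.trans, h.trans⟩

theorem Equiv.Perm.SemiconjOnCycle.sameCycleFinset_eq {f : α → β} {σ : Perm β} {τ : Perm α}
    {s : α} (h : σ.SemiconjOnCycle f τ s) :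
    sameCycleFinset σ (f s) = (sameCycleFinset τ s).image f := by
  ext d
  simp [mem_sameCycleFinset, h.sameCycle_iff]

end SameCycleFinset

theorem cycCount_eq_card_image {m : ℕ} (σ : Perm (Fin m)) :
    cycCount σ = #(univ.image (sameCycleFinset σ)) := by
  refine card_bij (fun c _ => sameCycleFinset σ c) (fun c _ => mem_image_of_mem _ (mem_univ c))
    (fun c hc c' hc' hcc' => ?_) (fun S hS => ?_)
  · simp only [mem_filter, mem_univ, true_and] at hc hc'
    have h := sameCycleFinset_eq_iff.mp hcc'
    exact le_antisymm (hc c' h) (hc' c h.symm)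
  · obtain ⟨c, -, rfl⟩ := mem_image.mp hS
    have hne : (sameCycleFinset σ c).Nonempty := ⟨c, mem_sameCycleFinset.mpr .rfl⟩
    have hmin := mem_sameCycleFinset.mp (min'_mem _ hne)
    refine ⟨_, mem_filter.mpr ⟨mem_univ _, fun d hd => ?_⟩, sameCycleFinset_eq_iff.mpr hmin.symm⟩
    exact min'_le _ d (mem_sameCycleFinset.mpr (hmin.trans hd))

theorem cycCount_le {m : ℕ} (σ : Perm (Fin m)) : cycCount σ ≤ m :=
  (card_filter_le _ _).trans (by simp)

theorem Fin.self_notMem_image_succAbove {n : ℕ} (j : Fin (n + 1)) (S : Finset (Fin n)) :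
    j ∉ S.image j.succAbove := by
  simp [Fin.succAbove_ne]

theorem List.filter_finRange_succAbove {n : ℕ} (j : Fin (n + 2)) (p : Fin (n + 2) → Bool)
    (hj : p j = false) :
    (finRange (n + 2)).filter p = ((finRange (n + 1)).filter fun c => p (j.succAbove c)).map
      j.succAbove := by
  refine ((pairwise_lt_finRange _).filter _).eq_of_mem_iff
    (pairwise_map.mpr (((pairwise_lt_finRange _).filter _).imp (Fin.strictMono_succAbove j ·)))
    fun x => ?_
  simp only [mem_filter, mem_finRange, true_and, mem_map]
  constructor
  · intro hx
    obtain ⟨s, rfl⟩ := Fin.exists_succAbove_eq fun h : x = j => by simp [h, hj] at hx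
    exact ⟨s, hx, rfl⟩
  · rintro ⟨s, hs, rfl⟩
    exact hs

section InsertPerm

variable {n : ℕ} (j : Fin (n + 2))

-- `insertPerm j (none, τ)` fixes `j`; `insertPerm j (some t, τ)` is `τ` with `j` inserted into
-- the cycle of `t`, between `τ⁻¹ t` and `t` (everything transported along `j.succAbove`).
def insertPerm : Option (Fin (n + 1)) × Perm (Fin (n + 1)) ≃ Perm (Fin (n + 2)) :=
  ((finSuccEquiv' j).permCongr.trans Perm.decomposeOption).symm

variable (τ : Perm (Fin (n + 1)))

theorem insertPerm_none_apply_self : insertPerm j (none, τ) j = j := by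
  simp [insertPerm]

theorem insertPerm_none_apply_succAbove (s : Fin (n + 1)) :
    insertPerm j (none, τ) (j.succAbove s) = j.succAbove (τ s) := by
  simp [insertPerm]

theorem insertPerm_some_apply_self (t : Fin (n + 1)) :
    insertPerm j (some t, τ) j = j.succAbove t := by
  simp [insertPerm]

theorem insertPerm_some_apply_succAbove (t s : Fin (n + 1)) :
    insertPerm j (some t, τ) (j.succAbove s) = if τ s = t then j else j.succAbove (τ s) := by
  simp only [insertPerm, Equiv.symm_trans_apply, Perm.decomposeOption_symm_apply,
    Equiv.permCongr_symm_apply, Perm.mul_apply, optionCongr_apply, Option.map_some,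
    finSuccEquiv'_succAbove]
  split_ifs with h
  · simp [h]
  · rw [swap_apply_of_ne_of_ne (by simp) (by simpa using h)]
    simp

theorem image_sameCycleFinset_univ (σ : Perm (Fin (n + 2))) :
    univ.image (sameCycleFinset σ) =
      insert (sameCycleFinset σ j) (univ.image fun s => sameCycleFinset σ (j.succAbove s)) := by
  rw [Fin.univ_succAbove _ j, cons_eq_insert, image_insert, map_eq_image, image_image]
  rfl

end InsertPerm

section FixingInsertion

variable {n : ℕ} (j : Fin (n + 2)) (τ : Perm (Fin (n + 1)))

theorem semiconjOnCycle_insertPerm_none (s : Fin (n + 1)) :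
    (insertPerm j (none, τ)).SemiconjOnCycle j.succAbove τ s :=
  fun x _ => insertPerm_none_apply_succAbove j τ x

theorem sameCycle_insertPerm_none_self {d : Fin (n + 2)} :
    (insertPerm j (none, τ)).SameCycle j d ↔ j = d :=
  ⟨fun h => h.eq_of_left (insertPerm_none_apply_self j τ), fun h => h ▸ .rfl⟩

theorem cycProdR_insertPerm_none_self (A : Matrix (Fin (n + 2)) (Fin (n + 2)) ℍ[ℝ]) :
    cycProdR A (insertPerm j (none, τ)) j = A j j := by
  have hfix := insertPerm_none_apply_self j τ
  simp [cycProdR, minimalPeriod_eq_one_iff_isFixedPt.mpr hfix, hfix]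

theorem cycCount_insertPerm_none : cycCount (insertPerm j (none, τ)) = cycCount τ + 1 := by
  have hj : sameCycleFinset (insertPerm j (none, τ)) j = {j} := by
    ext d
    rw [mem_sameCycleFinset, sameCycle_insertPerm_none_self, mem_singleton, eq_comm]
  rw [cycCount_eq_card_image, cycCount_eq_card_image, image_sameCycleFinset_univ j, hj]
  simp_rw [(semiconjOnCycle_insertPerm_none j τ _).sameCycleFinset_eq]
  rw [show univ.image (fun s => (sameCycleFinset τ s).image j.succAbove) =
      (univ.image (sameCycleFinset τ)).image (image j.succAbove) by rw [image_image]; rfl]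
  rw [card_insert_of_notMem,
    card_image_of_injective _ (image_injective Fin.succAbove_right_injective)]
  simp only [mem_image, not_exists, not_and]
  exact fun S _ hS => Fin.self_notMem_image_succAbove j S (hS ▸ mem_singleton_self j)

end FixingInsertion

section TransposingInsertion

variable {n : ℕ} (j : Fin (n + 2)) (τ : Perm (Fin (n + 1))) (t : Fin (n + 1))

theorem pow_succ_insertPerm_some_apply_self {k : ℕ} (hk : k < minimalPeriod τ t) :
    (insertPerm j (some t, τ) ^ (k + 1)) j = j.succAbove ((τ ^ k) t) := by
  induction k with
  | zero => exact insertPerm_some_apply_self j τ t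
  | succ k ih =>
    have hτ : (τ ^ (k + 1)) t ≠ t := by
      rw [← Perm.iterate_eq_pow]
      exact not_isPeriodicPt_of_pos_of_lt_minimalPeriod k.succ_ne_zero hk
    rw [pow_succ', Perm.mul_apply, ih (by omega), insertPerm_some_apply_succAbove,
      ← Perm.mul_apply, ← pow_succ', if_neg hτ]

theorem minimalPeriod_insertPerm_some_self :
    minimalPeriod (insertPerm j (some t, τ)) j = minimalPeriod τ t + 1 := by
  have hper : IsPeriodicPt (insertPerm j (some t, τ)) (minimalPeriod τ t + 1) j := by
    obtain ⟨k, hk⟩ := Nat.exists_eq_add_one_of_ne_zero (Perm.minimalPeriod_pos τ t).ne'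
    have hτ : (τ ^ (k + 1)) t = t := by
      rw [← hk]
      exact Perm.pow_minimalPeriod_apply τ t
    rw [IsPeriodicPt, IsFixedPt, Perm.iterate_eq_pow, hk, pow_succ', Perm.mul_apply,
      pow_succ_insertPerm_some_apply_self j τ t (by omega), insertPerm_some_apply_succAbove,
      ← Perm.mul_apply, ← pow_succ', if_pos hτ]
  refine le_antisymm (hper.minimalPeriod_le (by omega)) (not_lt.mp fun hlt => ?_)
  obtain ⟨k, hk⟩ :=
    Nat.exists_eq_add_one_of_ne_zero (Perm.minimalPeriod_pos (insertPerm j (some t, τ)) j).ne'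
  have hfix := Perm.pow_minimalPeriod_apply (insertPerm j (some t, τ)) j
  rw [hk, pow_succ_insertPerm_some_apply_self j τ t (by omega)] at hfix
  exact Fin.succAbove_ne j _ hfix

theorem sameCycle_insertPerm_some_self {d : Fin (n + 2)} :
    (insertPerm j (some t, τ)).SameCycle j d ↔
      d = j ∨ ∃ x, τ.SameCycle t x ∧ j.succAbove x = d := by
  set σ := insertPerm j (some t, τ)
  have hσj : σ.SameCycle j (j.succAbove t) := by
    rw [← insertPerm_some_apply_self j τ t]
    exact Perm.sameCycle_apply_right.mpr .rfl
  constructor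
  · intro h
    obtain ⟨k, rfl⟩ := h.exists_nat_pow_eq
    induction k with
    | zero => exact .inl rfl
    | succ k ih =>
      rw [pow_succ', Perm.mul_apply]
      rcases ih (Perm.sameCycle_pow_right.mpr .rfl) with h | ⟨x, hx, h⟩
      · exact .inr ⟨t, .rfl, by rw [h, insertPerm_some_apply_self]⟩
      · rw [← h, insertPerm_some_apply_succAbove]
        split_ifs
        · exact .inl rfl
        · exact .inr ⟨τ x, Perm.sameCycle_apply_right.mpr hx, rfl⟩
  · rintro (rfl | ⟨x, hx, rfl⟩)
    · exact .rfl
    obtain ⟨k, rfl⟩ := hx.exists_nat_pow_eq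
    induction k with
    | zero => exact hσj
    | succ k ih =>
      by_cases hk : (τ ^ (k + 1)) t = t
      · rwa [hk]
      have hstep := insertPerm_some_apply_succAbove j τ t ((τ ^ k) t)
      rw [← Perm.mul_apply, ← pow_succ', if_neg hk] at hstep
      rw [← hstep]
      exact Perm.sameCycle_apply_right.mpr (ih (Perm.sameCycle_pow_right.mpr .rfl))

theorem semiconjOnCycle_insertPerm_some {s : Fin (n + 1)} (hs : ¬τ.SameCycle t s) :
    (insertPerm j (some t, τ)).SemiconjOnCycle j.succAbove τ s := fun x hx => by
  rw [insertPerm_some_apply_succAbove,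
    if_neg fun hxt => hs (hxt ▸ Perm.sameCycle_apply_right.mpr hx).symm]

theorem updateRow_submatrix_succAbove_apply (A : Matrix (Fin (n + 2)) (Fin (n + 2)) ℍ[ℝ])
    (x y : Fin (n + 1)) :
    (A.updateRow (j.succAbove t) (A j)).submatrix j.succAbove j.succAbove x y =
      A (if x = t then j else j.succAbove x) (j.succAbove y) := by
  split_ifs with hx
  · simp [hx]
  · simp [updateRow_ne (Fin.succAbove_right_injective.ne hx)]

theorem cycProdR_insertPerm_some_self (A : Matrix (Fin (n + 2)) (Fin (n + 2)) ℍ[ℝ]) :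
    cycProdR A (insertPerm j (some t, τ)) j =
      cycProdR ((A.updateRow (j.succAbove t) (A j)).submatrix j.succAbove j.succAbove) τ t *
        A (j.succAbove t) j := by
  unfold cycProdR
  rw [minimalPeriod_insertPerm_some_self, List.range_succ_eq_map, List.map_cons,
    List.reverse_cons, List.prod_append, List.map_map]
  congr 3
  · refine List.map_congr_left fun k hk => ?_
    have hk := pow_succ_insertPerm_some_apply_self j τ t (List.mem_range.mp hk)
    simp only [Function.comp_apply, updateRow_submatrix_succAbove_apply]
    rw [pow_succ', Perm.mul_apply, hk, insertPerm_some_apply_succAbove, pow_succ' τ,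
      Perm.mul_apply]
  · simp [insertPerm_some_apply_self]

-- The cycle of `insertPerm j (some t, τ)` coming from the `τ`-cycle `S`.
def liftCycleSet (S : Finset (Fin (n + 1))) : Finset (Fin (n + 2)) :=
  if t ∈ S then insert j (S.image j.succAbove) else S.image j.succAbove

theorem succAbove_mem_liftCycleSet {S : Finset (Fin (n + 1))} {x : Fin (n + 1)} :
    j.succAbove x ∈ liftCycleSet j t S ↔ x ∈ S := by
  unfold liftCycleSet
  split_ifs <;> simp [Fin.succAbove_ne]

theorem liftCycleSet_injective : Injective (liftCycleSet j t) := fun S S' h => by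
  ext x
  rw [← succAbove_mem_liftCycleSet j t, h, succAbove_mem_liftCycleSet]

theorem sameCycleFinset_insertPerm_some_self :
    sameCycleFinset (insertPerm j (some t, τ)) j = liftCycleSet j t (sameCycleFinset τ t) := by
  ext d
  rw [mem_sameCycleFinset, sameCycle_insertPerm_some_self, liftCycleSet,
    if_pos (mem_sameCycleFinset.mpr .rfl)]
  simp [mem_sameCycleFinset]

theorem sameCycleFinset_insertPerm_some_succAbove (s : Fin (n + 1)) :
    sameCycleFinset (insertPerm j (some t, τ)) (j.succAbove s) =
      liftCycleSet j t (sameCycleFinset τ s) := by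
  by_cases hs : τ.SameCycle t s
  · rw [← sameCycleFinset_eq_iff.mpr
        ((sameCycle_insertPerm_some_self j τ t).mpr (.inr ⟨s, hs, rfl⟩)),
      sameCycleFinset_insertPerm_some_self, sameCycleFinset_eq_iff.mpr hs]
  · rw [(semiconjOnCycle_insertPerm_some j τ t hs).sameCycleFinset_eq, liftCycleSet,
      if_neg fun h => hs (mem_sameCycleFinset.mp h).symm]

theorem cycCount_insertPerm_some : cycCount (insertPerm j (some t, τ)) = cycCount τ := by
  rw [cycCount_eq_card_image, cycCount_eq_card_image, image_sameCycleFinset_univ j,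
    sameCycleFinset_insertPerm_some_self]
  simp_rw [sameCycleFinset_insertPerm_some_succAbove]
  rw [show univ.image (fun s => liftCycleSet j t (sameCycleFinset τ s)) =
      (univ.image (sameCycleFinset τ)).image (liftCycleSet j t) by rw [image_image]; rfl,
    insert_eq_self.mpr (mem_image_of_mem _ (mem_image_of_mem _ (mem_univ t))),
    card_image_of_injective _ (liftCycleSet_injective j t)]

end TransposingInsertion

section CdetTerm

variable {m : ℕ}

def otherCycleMins (σ : Perm (Fin m)) (j : Fin m) : List (Fin m) :=
  (List.finRange m).filter fun c => decide (¬σ.SameCycle j c ∧ ∀ d, σ.SameCycle c d → c ≤ d)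

def cdetTerm (A : Matrix (Fin m) (Fin m) ℍ[ℝ]) (j : Fin m) (σ : Perm (Fin m)) : ℍ[ℝ] :=
  (-1) ^ (m - cycCount σ) *
    (((otherCycleMins σ j).map (cycProdR A σ)).reverse.prod * cycProdR A σ j)

theorem cdet_eq_sum_cdetTerm (A : Matrix (Fin m) (Fin m) ℍ[ℝ]) (j : Fin m) :
    cdet A j = ∑ σ, cdetTerm A j σ :=
  rfl

theorem filter_cycleMin_finRange_eq_cons (τ : Perm (Fin (m + 1))) :
    (List.finRange (m + 1)).filter (fun c => decide (∀ d, τ.SameCycle c d → c ≤ d)) =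
      0 :: otherCycleMins τ 0 := by
  refine ((List.pairwise_lt_finRange _).filter _).eq_of_mem_iff
    (.cons (fun x hx => ?_) ((List.pairwise_lt_finRange _).filter _)) fun x => ?_
  · simp only [otherCycleMins, List.mem_filter, decide_eq_true_eq] at hx
    exact Fin.pos_of_ne_zero fun h => hx.2.1 (h ▸ .rfl)
  · simp only [otherCycleMins, List.mem_filter, List.mem_finRange, true_and, List.mem_cons,
      decide_eq_true_eq]
    constructor
    · intro hx
      by_cases h0 : τ.SameCycle 0 x
      · exact .inl (le_antisymm (hx 0 h0.symm) (Fin.zero_le x))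
      · exact .inr ⟨h0, hx⟩
    · rintro (rfl | ⟨-, hx⟩)
      · exact fun d _ => Fin.zero_le d
      · exact hx

end CdetTerm

section InsertPermTerms

variable {n : ℕ} (A : Matrix (Fin (n + 2)) (Fin (n + 2)) ℍ[ℝ]) (j : Fin (n + 2))
  (τ : Perm (Fin (n + 1)))

theorem otherCycleMins_insertPerm_none :
    otherCycleMins (insertPerm j (none, τ)) j =
      ((List.finRange (n + 1)).filter fun c => decide (∀ d, τ.SameCycle c d → c ≤ d)).map
        j.succAbove := by
  rw [otherCycleMins, List.filter_finRange_succAbove j _ (by simp [Perm.SameCycle.refl])]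
  congr 1
  refine List.filter_congr fun s _ => decide_eq_decide.mpr ?_
  rw [sameCycle_insertPerm_none_self,
    (semiconjOnCycle_insertPerm_none j τ s).isCycleMin_iff (Fin.strictMono_succAbove j)]
  simp [(Fin.succAbove_ne j s).symm]

theorem otherCycleMins_insertPerm_some (t : Fin (n + 1)) :
    otherCycleMins (insertPerm j (some t, τ)) j = (otherCycleMins τ t).map j.succAbove := by
  rw [otherCycleMins, otherCycleMins,
    List.filter_finRange_succAbove j _ (by simp [Perm.SameCycle.refl])]
  congr 1
  refine List.filter_congr fun s _ => decide_eq_decide.mpr ?_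
  by_cases hs : τ.SameCycle t s
  · simp [hs, sameCycle_insertPerm_some_self]
  · rw [(semiconjOnCycle_insertPerm_some j τ t hs).isCycleMin_iff (Fin.strictMono_succAbove j)]
    simp [hs, sameCycle_insertPerm_some_self, Fin.succAbove_ne,
      Fin.succAbove_right_injective.eq_iff]

theorem cdetTerm_insertPerm_none :
    cdetTerm A j (insertPerm j (none, τ)) =
      cdetTerm (A.submatrix j.succAbove j.succAbove) 0 τ * A j j := by
  have hcyc : cycProdR A (insertPerm j (none, τ)) ∘ j.succAbove =
      cycProdR (A.submatrix j.succAbove j.succAbove) τ := funext fun s =>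
    (semiconjOnCycle_insertPerm_none j τ s).cycProdR_eq Fin.succAbove_right_injective
      fun _ _ _ => rfl
  rw [cdetTerm, cdetTerm, otherCycleMins_insertPerm_none, filter_cycleMin_finRange_eq_cons,
    List.map_map, hcyc, cycProdR_insertPerm_none_self, cycCount_insertPerm_none, List.map_cons,
    List.reverse_cons, List.prod_append, List.prod_singleton,
    show n + 2 - (cycCount τ + 1) = n + 1 - cycCount τ by omega]
  simp only [mul_assoc]

theorem cdetTerm_insertPerm_some (t : Fin (n + 1)) :
    cdetTerm A j (insertPerm j (some t, τ)) =
      -cdetTerm ((A.updateRow (j.succAbove t) (A j)).submatrix j.succAbove j.succAbove) t τ *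
        A (j.succAbove t) j := by
  have hcyc : ∀ s ∈ otherCycleMins τ t,
      (cycProdR A (insertPerm j (some t, τ)) ∘ j.succAbove) s =
        cycProdR ((A.updateRow (j.succAbove t) (A j)).submatrix j.succAbove j.succAbove) τ s := by
    intro s hs
    have hts : ¬τ.SameCycle t s := by
      simp only [otherCycleMins, List.mem_filter, decide_eq_true_eq] at hs
      exact hs.2.1
    refine (semiconjOnCycle_insertPerm_some j τ t hts).cycProdR_eq
      Fin.succAbove_right_injective fun x y hx => ?_
    rw [updateRow_submatrix_succAbove_apply, if_neg fun hxt => hts (hxt ▸ hx).symm]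
  have hsign : (-1 : ℍ[ℝ]) ^ (n + 2 - cycCount τ) = -(-1) ^ (n + 1 - cycCount τ) := by
    rw [show n + 2 - cycCount τ = n + 1 - cycCount τ + 1 by have := cycCount_le τ; omega,
      pow_succ, mul_neg_one]
  rw [cdetTerm, cdetTerm, otherCycleMins_insertPerm_some, List.map_map,
    List.map_congr_left hcyc, cycCount_insertPerm_some, cycProdR_insertPerm_some_self, hsign]
  simp only [neg_mul, mul_assoc]

end InsertPermTerms

section Cofactor

variable {n : ℕ} (A : Matrix (Fin (n + 2)) (Fin (n + 2)) ℍ[ℝ]) (j : Fin (n + 2))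

theorem Lcof_self : Lcof A j j = cdet (A.submatrix j.succAbove j.succAbove) 0 :=
  if_pos rfl

theorem Lcof_succAbove (t : Fin (n + 1)) :
    Lcof A (j.succAbove t) j =
      -cdet ((A.updateRow (j.succAbove t) (A j)).submatrix j.succAbove j.succAbove) t := by
  simp only [Lcof, if_neg (Fin.succAbove_ne j t), Fin.succAbove_right_injective.eq_iff,
    filter_eq', mem_univ, if_true, sum_singleton]

end Cofactor

/-- Expansion of the `j`-th column determinant by left cofactors along the `j`-th column:
`cdet_j A = Σ_{i=1}^n L_{ij} · a_{ij}`. -/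
theorem cdet_cofactor_expansion {n : ℕ} (A : Matrix (Fin (n + 2)) (Fin (n + 2)) ℍ[ℝ])
    (j : Fin (n + 2)) :
    cdet A j = ∑ i, Lcof A i j * A i j := by
  rw [cdet_eq_sum_cdetTerm, ← (insertPerm j).sum_comp, Fintype.sum_prod_type,
    Fintype.sum_option, Fin.sum_univ_succAbove _ j]
  simp only [cdetTerm_insertPerm_none, cdetTerm_insertPerm_some, ← sum_mul, sum_neg_distrib,
    ← cdet_eq_sum_cdetTerm, Lcof_self, Lcof_succAbove]
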